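/- For any prime p and positive integer a, the sum ∑_{k=1}^{p^a-1} (-1)^k · B_k(x) is congruent to ∑_{r=1}^{a} x^{p^r - 1} modulo p·Z_p[x]. -/

import Mathlib

/-- Stirling numbers of the second kind. -/
def stirling2 : ℕ → ℕ → ℕ
  | 0, 0 => 1
  | 0, _ + 1 => 0
  | _ + 1, 0 => 0
  | n + 1, k + 1 => (k + 1) * stirling2 n (k + 1) + stirling2 n k

/-- The Bell polynomial `B_n(x) = ∑_{k=0}^n S(n,k) x^k`. -/
noncomputable def bellPoly (R : Type*) [CommRing R] (n : ℕ) : Polynomial R :=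
  ∑ k ∈ Finset.range (n + 1), Polynomial.C (stirling2 n k : R) * Polynomial.X ^ k

/-!
Work over `𝔽_p` and let `L : 𝔽_p[x][θ] → 𝔽_p[x]` be the `𝔽_p[x]`-linear umbral functional
`θ^n ↦ B_n(x)`. Since `k! S(n,k)` is the `k`-th forward difference of `j ↦ j^n` at `0` and
`j^p = j` in `𝔽_p`, we get `S(p,k) ≡ S(1,k)` for `k < p`, i.e. `B_p = x + x^p`. With the
recurrence `B_{n+1} = x (B_n + B_n')` this gives Touchard's congruence
`B_{n+p} = B_{n+1} + x^p B_n`, so `L` vanishes on the ideal generated by `θ^p - θ - x^p`.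

In the quotient ring, `θ^p = θ + x^p` and Frobenius give `θ^{p^a} = θ + E` with
`E = ∑_{r=1}^a x^{p^r}`. Summing a geometric series, `G = ∑_{k=1}^{p^a-1} (-θ)^k` satisfies
`(1 + θ) G = E`, while `K = (1 + θ)^{p-1} - 1` satisfies `(1 + θ) K = x^p`; hence
`x^p G = E K`. Applying `L`, `L(G)` is the alternating sum of Bell polynomials and
`L(K) = x^{p-1}` because `B_p = x ∑_j C(p-1,j) B_j`, so `x^p ∑_k (-1)^k B_k = x^{p-1} E`.
Finally a polynomial over `ℤ_p` whose reduction mod `p` vanishes is divisible by `p`.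
-/

open Finset Polynomial fwdDiff
open scoped Nat

theorem stirling2_eq_stirlingSecond : stirling2 = Nat.stirlingSecond := by
  funext n k
  induction n generalizing k with
  | zero => cases k <;> rfl
  | succ n ih => cases k <;> simp [stirling2, Nat.stirlingSecond, ih]

namespace Nat

theorem mul_descFactorial (m k : ℕ) :
    m * m.descFactorial k = m.descFactorial (k + 1) + k * m.descFactorial k := by
  rw [descFactorial_succ]
  rcases le_or_gt k m with h | h
  · rw [← add_mul, Nat.sub_add_cancel h]
  · simp [descFactorial_eq_zero_iff_lt.mpr h]

theorem pow_eq_sum_stirlingSecond_mul_descFactorial (n m : ℕ) :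
    m ^ n = ∑ k ∈ range (n + 1), stirlingSecond n k * m.descFactorial k := by
  induction n with
  | zero => simp
  | succ n ih =>
    have shift : ∑ k ∈ range (n + 1), k * stirlingSecond n k * m.descFactorial k =
        ∑ k ∈ range (n + 1), (k + 1) * stirlingSecond n (k + 1) * m.descFactorial (k + 1) := by
      rw [sum_range_succ', sum_range_succ, stirlingSecond_eq_zero_of_lt (lt_add_one n)]
      simp
    rw [pow_succ, mul_comm, ih, mul_sum, sum_range_succ' _ (n + 1)]
    simp only [stirlingSecond_succ_succ, stirlingSecond_succ_zero, zero_mul, add_zero]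
    calc ∑ k ∈ range (n + 1), m * (stirlingSecond n k * m.descFactorial k)
        = ∑ k ∈ range (n + 1), k * stirlingSecond n k * m.descFactorial k
          + ∑ k ∈ range (n + 1), stirlingSecond n k * m.descFactorial (k + 1) := by
          rw [← sum_add_distrib]
          refine sum_congr rfl fun k _ ↦ ?_
          rw [mul_left_comm, mul_descFactorial]
          ring
      _ = _ := by rw [shift, ← sum_add_distrib]; simp only [add_mul]

theorem fwdDiff_iter_pow_eq_factorial_mul_stirlingSecond (n m : ℕ) :
    Δ_[1] ^[m] (fun j : ℕ ↦ (j : ℤ) ^ n) 0 = m ! * stirlingSecond n m := by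
  have expand : (fun j : ℕ ↦ (j : ℤ) ^ n) =
      ∑ k ∈ range (n + 1), ((stirlingSecond n k * k ! : ℕ) : ℤ) • fun j : ℕ ↦ (j.choose k : ℤ) := by
    funext j
    simp only [Finset.sum_apply, Pi.smul_apply, smul_eq_mul]
    exact_mod_cast (pow_eq_sum_stirlingSecond_mul_descFactorial n j).trans
      (sum_congr rfl fun k _ ↦ by rw [descFactorial_eq_factorial_mul_choose, mul_assoc])
  rw [expand, fwdDiff_iter_finsetSum, Finset.sum_apply]
  simp only [fwdDiff_iter_const_smul, Pi.smul_apply, fwdDiff_iter_choose_zero, smul_ite,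
    smul_zero, sum_ite_eq, mem_range]
  split_ifs with h
  · push_cast
    ring
  · simp [stirlingSecond_eq_zero_of_lt (by omega : n < m)]

theorem stirlingSecond_prime_modEq {p k : ℕ} (hp : p.Prime) (hk : k < p) :
    stirlingSecond p k ≡ stirlingSecond 1 k [MOD p] := by
  have := Fact.mk hp
  have hfact : IsUnit (k ! : ZMod p) := by
    rw [isUnit_iff_ne_zero, Ne, ZMod.natCast_eq_zero_iff, hp.dvd_factorial]
    omega
  have explicit (n : ℕ) : (k ! : ZMod p) * stirlingSecond n k =
      ∑ i ∈ range (k + 1), ((-1) ^ (k - i) * k.choose i : ℤ) • (i : ZMod p) ^ n := by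
    have := congrArg (Int.cast : ℤ → ZMod p)
      (fwdDiff_iter_pow_eq_factorial_mul_stirlingSecond n k)
    rw [fwdDiff_iter_eq_sum_shift] at this
    push_cast at this
    simp [← this]
  rw [← ZMod.natCast_eq_natCast_iff]
  apply hfact.mul_left_cancel
  simp only [explicit, ZMod.pow_card, pow_one]

end Nat

section BellPolynomial

variable (R : Type*) [CommRing R]

theorem coeff_bellPoly (n k : ℕ) : (bellPoly R n).coeff k = Nat.stirlingSecond n k := by
  simp only [bellPoly, stirling2_eq_stirlingSecond, finsetSum_coeff, coeff_C_mul_X_pow,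
    sum_ite_eq, mem_range]
  split_ifs with h
  · rfl
  · rw [Nat.stirlingSecond_eq_zero_of_lt (by omega), Nat.cast_zero]

theorem bellPoly_eq_sum_range {n N : ℕ} (h : n < N) :
    bellPoly R n = ∑ k ∈ range N, C (Nat.stirlingSecond n k : R) * X ^ k := by
  rw [bellPoly, stirling2_eq_stirlingSecond]
  refine sum_subset (range_subset_range.mpr h) fun k _ hk ↦ ?_
  rw [Nat.stirlingSecond_eq_zero_of_lt (by simpa using hk), Nat.cast_zero, map_zero, zero_mul]

@[simp]
theorem bellPoly_zero : bellPoly R 0 = 1 := by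
  simp [bellPoly, stirling2]

@[simp]
theorem bellPoly_one : bellPoly R 1 = X := by
  simp [bellPoly, stirling2, sum_range_succ]

theorem bellPoly_succ (n : ℕ) :
    bellPoly R (n + 1) = X * (bellPoly R n + derivative (bellPoly R n)) := by
  ext (_ | k)
  · simp [coeff_bellPoly]
  · simp only [coeff_bellPoly, coeff_X_mul, coeff_add, coeff_derivative,
      Nat.stirlingSecond_succ_succ]
    push_cast
    ring

theorem X_mul_sum_choose_mul_bellPoly (n : ℕ) :
    X * ∑ j ∈ range (n + 1), (n.choose j : R[X]) * bellPoly R j = bellPoly R (n + 1) := by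
  induction n with
  | zero => simp
  | succ n ih =>
    set c := ∑ j ∈ range (n + 1), (n.choose j : R[X]) * bellPoly R j
    have pascal : ∑ j ∈ range (n + 2), ((n + 1).choose j : R[X]) * bellPoly R j =
        c + X * (c + derivative c) := by
      rw [sum_choose_succ_mul (fun j _ ↦ bellPoly R j) n]
      congr 1
      rw [derivative_sum, ← sum_add_distrib, mul_sum]
      refine sum_congr rfl fun j _ ↦ ?_
      rw [bellPoly_succ, derivative_natCast_mul]
      ring
    rw [pascal, bellPoly_succ R (n + 1), ← ih, derivative_mul, derivative_X]
    ring

variable (p : ℕ) [Fact p.Prime] [CharP R p]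

theorem bellPoly_prime : bellPoly R p = X + X ^ p := by
  have hp := (Fact.out : p.Prime)
  have low : ∑ k ∈ range p, C (Nat.stirlingSecond p k : R) * X ^ k = X := by
    conv_rhs => rw [← bellPoly_one R, bellPoly_eq_sum_range R hp.one_lt]
    refine sum_congr rfl fun k hk ↦ ?_
    rw [(CharP.natCast_eq_natCast R p).mpr (Nat.stirlingSecond_prime_modEq hp (mem_range.mp hk))]
  rw [bellPoly_eq_sum_range R (lt_add_one p), sum_range_succ, low, Nat.stirlingSecond_self,
    Nat.cast_one, map_one, one_mul]

theorem bellPoly_add_prime (n : ℕ) :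
    bellPoly R (n + p) = bellPoly R (n + 1) + X ^ p * bellPoly R n := by
  induction n with
  | zero => simp [bellPoly_prime]
  | succ n ih =>
    rw [add_right_comm, bellPoly_succ, ih, bellPoly_succ R (n + 1), bellPoly_succ R n]
    simp only [derivative_add, derivative_mul, derivative_X_pow, CharP.cast_eq_zero, map_zero]
    ring

end BellPolynomial

section Umbral

variable (R : Type*) [CommRing R]

noncomputable def bellFunctional : R[X][X] →ₗ[R[X]] R[X] :=
  lsum fun n ↦ LinearMap.toSpanSingleton R[X] R[X] (bellPoly R n)

theorem bellFunctional_X_pow (n : ℕ) : bellFunctional R (X ^ n) = bellPoly R n := by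
  simp [bellFunctional, X_pow_eq_monomial]

noncomputable def touchardPoly (p : ℕ) : R[X][X] := X ^ p - (X + C (X ^ p))

theorem degree_touchardPoly [Nontrivial R] {p : ℕ} (hp : 1 < p) :
    (touchardPoly R p).degree = p := by
  rw [touchardPoly, degree_sub_eq_left_of_degree_lt] <;> rw [degree_X_pow]
  rw [degree_X_add_C]
  exact_mod_cast hp

variable (p : ℕ) [Fact p.Prime] [CharP R p]

theorem bellFunctional_mul_touchardPoly (g : R[X][X]) :
    bellFunctional R (g * touchardPoly R p) = 0 := by
  induction g using Polynomial.induction_on' with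
  | add f g hf hg => rw [add_mul, map_add, hf, hg, add_zero]
  | monomial n c =>
    have expand : X ^ n * touchardPoly R p =
        X ^ (n + p) - X ^ (n + 1) - (X ^ p : R[X]) • X ^ n := by
      rw [touchardPoly, smul_eq_C_mul]
      ring
    rw [← C_mul_X_pow_eq_monomial, mul_assoc, ← smul_eq_C_mul, map_smul, expand]
    simp only [map_sub, map_smul, bellFunctional_X_pow, bellPoly_add_prime, smul_eq_mul]
    ring

theorem bellFunctional_eq_of_mk_eq {u v : R[X][X]}
    (h : AdjoinRoot.mk (touchardPoly R p) u = AdjoinRoot.mk (touchardPoly R p) v) :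
    bellFunctional R u = bellFunctional R v := by
  obtain ⟨g, hg⟩ := AdjoinRoot.mk_eq_mk.mp h
  rw [← sub_eq_zero, ← map_sub, hg, mul_comm, bellFunctional_mul_touchardPoly]

theorem bellFunctional_X_add_one_pow_pred_sub_one :
    bellFunctional R ((X + 1) ^ (p - 1) - 1) = X ^ (p - 1) := by
  have hp := (Fact.out : p.Prime)
  have binomial : bellFunctional R ((X + 1) ^ (p - 1)) =
      ∑ j ∈ range (p - 1 + 1), ((p - 1).choose j : R[X]) * bellPoly R j := by
    rw [add_pow, map_sum]
    refine sum_congr rfl fun j _ ↦ ?_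
    rw [one_pow, mul_one, ← C_eq_natCast, mul_comm, ← smul_eq_C_mul, map_smul,
      bellFunctional_X_pow, smul_eq_mul]
  refine isRegular_X.left ?_
  dsimp only
  rw [map_sub, binomial, mul_sub, X_mul_sum_choose_mul_bellPoly, Nat.sub_add_cancel hp.one_le,
    bellPoly_prime, (by simpa using bellFunctional_X_pow R 0 : bellFunctional R 1 = 1),
    ← pow_succ', Nat.sub_add_cancel hp.one_le]
  ring

end Umbral

section ZModP

variable (p : ℕ) [Fact p.Prime]

instance : CharP (AdjoinRoot (touchardPoly (ZMod p) p)) p :=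
  have := AdjoinRoot.nontrivial (touchardPoly (ZMod p) p) <| by
    rw [degree_touchardPoly _ (Fact.out : p.Prime).one_lt]
    exact_mod_cast (Fact.out : p.Prime).ne_zero
  charP_of_injective_algebraMap' (ZMod p) p

local notation "θ" => AdjoinRoot.root (touchardPoly (ZMod p) p)
local notation "ι" => AdjoinRoot.of (touchardPoly (ZMod p) p)

theorem root_pow_prime : θ ^ p = θ + ι (X ^ p) := by
  have h : AdjoinRoot.mk (touchardPoly (ZMod p) p) (X ^ p - (X + C (X ^ p))) = 0 :=
    AdjoinRoot.mk_self
  rw [map_sub, map_add, map_pow, AdjoinRoot.mk_X, AdjoinRoot.mk_C] at h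
  linear_combination h

theorem root_pow_prime_pow (a : ℕ) : θ ^ p ^ a = θ + ι (∑ r ∈ Icc 1 a, X ^ p ^ r) := by
  induction a with
  | zero => simp
  | succ a ih =>
    rw [pow_succ', pow_mul, root_pow_prime, add_pow_char_pow, ih, ← map_pow, add_assoc, ← map_add,
      sum_Icc_succ_top (by omega), ← pow_mul, ← pow_succ']

theorem one_add_root_mul_sum_neg_root_pow (a : ℕ) :
    (1 + θ) * ∑ k ∈ Icc 1 (p ^ a - 1), (-θ) ^ k = ι (∑ r ∈ Icc 1 a, X ^ p ^ r) := by
  obtain ⟨M, hM⟩ : ∃ M, p ^ a = M + 1 :=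
    Nat.exists_eq_add_one.mpr (pow_pos (Fact.out : p.Prime).pos a)
  have geom := mul_neg_geom_sum (-θ) (p ^ a)
  rw [hM, range_eq_Ico, sum_eq_sum_Ico_succ_bot M.succ_pos, zero_add, Nat.succ_eq_add_one,
    Ico_add_one_right_eq_Icc, pow_zero, ← hM, neg_pow, neg_one_pow_char_pow,
    root_pow_prime_pow] at geom
  rw [hM, Nat.add_sub_cancel]
  linear_combination geom

theorem one_add_root_mul_pow_pred_sub_one : (1 + θ) * ((1 + θ) ^ (p - 1) - 1) = ι (X ^ p) := by
  rw [mul_sub, mul_one, ← pow_succ', Nat.sub_add_cancel (Fact.out : p.Prime).one_le,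
    add_pow_char, one_pow, root_pow_prime]
  ring

theorem sum_Icc_neg_one_pow_mul_bellPoly (a : ℕ) :
    ∑ k ∈ Icc 1 (p ^ a - 1), C ((-1 : ZMod p) ^ k) * bellPoly (ZMod p) k =
      ∑ r ∈ Icc 1 a, X ^ (p ^ r - 1) := by
  have hp := (Fact.out : p.Prime)
  set G : (ZMod p)[X][X] := ∑ k ∈ Icc 1 (p ^ a - 1), (-X) ^ k
  set K : (ZMod p)[X][X] := (X + 1) ^ (p - 1) - 1
  have bellFunctional_G : bellFunctional (ZMod p) G =
      ∑ k ∈ Icc 1 (p ^ a - 1), C ((-1 : ZMod p) ^ k) * bellPoly (ZMod p) k := by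
    rw [map_sum]
    refine sum_congr rfl fun k _ ↦ ?_
    have sign : (-X : (ZMod p)[X][X]) ^ k = C (C ((-1) ^ k)) * X ^ k := by
      rw [neg_pow (X : (ZMod p)[X][X]), map_pow, map_pow, map_neg, map_neg, map_one, map_one]
    rw [sign, ← smul_eq_C_mul, map_smul, bellFunctional_X_pow, smul_eq_mul]
  have congruence : AdjoinRoot.mk (touchardPoly (ZMod p) p) (C (X ^ p) * G) =
      AdjoinRoot.mk (touchardPoly (ZMod p) p) (C (∑ r ∈ Icc 1 a, X ^ p ^ r) * K) := by
    have hG := one_add_root_mul_sum_neg_root_pow p a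
    have hK := one_add_root_mul_pow_pred_sub_one p
    simp only [G, K, map_mul, map_sum, map_sub, map_pow, map_neg, map_add, map_one,
      AdjoinRoot.mk_X, AdjoinRoot.mk_C] at hG hK ⊢
    linear_combination ((θ + 1) ^ (p - 1) - 1) * hG - (∑ k ∈ Icc 1 (p ^ a - 1), (-θ) ^ k) * hK
  have key := bellFunctional_eq_of_mk_eq (ZMod p) p congruence
  rw [← smul_eq_C_mul, ← smul_eq_C_mul, map_smul, map_smul, bellFunctional_G,
    bellFunctional_X_add_one_pow_pred_sub_one, smul_eq_mul, smul_eq_mul] at key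
  refine (isRegular_X_pow p).left ?_
  dsimp only
  rw [key, sum_mul, mul_sum]
  refine sum_congr rfl fun r _ ↦ ?_
  rw [← pow_add, ← pow_add]
  have := Nat.one_le_pow r p hp.pos
  have := hp.one_le
  congr 1
  omega

end ZModP

theorem bellPoly_map {R S : Type*} [CommRing R] [CommRing S] (f : R →+* S) (n : ℕ) :
    (bellPoly R n).map f = bellPoly S n := by
  simp [bellPoly, Polynomial.map_sum]

theorem PadicInt.natCast_dvd_of_map_toZMod_eq_zero {p : ℕ} [Fact p.Prime] {f : ℤ_[p][X]}
    (hf : f.map PadicInt.toZMod = 0) : (p : ℤ_[p][X]) ∣ f := by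
  rw [← C_eq_natCast, C_dvd_iff_dvd_coeff]
  intro n
  have hn : PadicInt.toZMod (f.coeff n) = 0 := by rw [← coeff_map, hf, coeff_zero]
  rwa [← RingHom.mem_ker, PadicInt.ker_toZMod, PadicInt.maximalIdeal_eq_span_p,
    Ideal.mem_span_singleton] at hn

open Polynomial in
theorem alt_sum_bellPoly_general (p : ℕ) [Fact p.Prime] (a : ℕ) :
    (p : Polynomial ℤ_[p]) ∣
      (∑ k ∈ Finset.Icc 1 (p ^ a - 1), Polynomial.C ((-1 : ℤ_[p]) ^ k) * bellPoly ℤ_[p] k) -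
        ∑ r ∈ Finset.Icc 1 a, X ^ (p ^ r - 1) := by
  apply PadicInt.natCast_dvd_of_map_toZMod_eq_zero
  simp only [Polynomial.map_sub, Polynomial.map_sum, Polynomial.map_mul, Polynomial.map_C,
    map_pow PadicInt.toZMod, map_neg PadicInt.toZMod, map_one PadicInt.toZMod, bellPoly_map,
    Polynomial.map_pow, Polynomial.map_X]
  rw [sum_Icc_neg_one_pow_mul_bellPoly, sub_self]

open Polynomial in
/-- For a prime `p` and `a ≥ 1`,
`∑_{k=1}^{p^a-1} (-1)^k B_k(x) ≡ ∑_{r=1}^a x^{p^r-1}` mod `p·ℤ_p[x]`. -/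
theorem alt_sum_bellPoly (p : ℕ) [Fact p.Prime] (a : ℕ) (ha : 0 < a) :
    (p : Polynomial ℤ_[p]) ∣
      (∑ k ∈ Finset.Icc 1 (p ^ a - 1), Polynomial.C ((-1 : ℤ_[p]) ^ k) * bellPoly ℤ_[p] k) -
        ∑ r ∈ Finset.Icc 1 a, X ^ (p ^ r - 1) :=
  alt_sum_bellPoly_general p a
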